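/- Let u_t, u_{t'}, v_t, v_{t'} be square-integrable real random variables such that (u_t, u_{t'}) is independent of (v_t, v_{t'}), u_t is independent of u_{t'}, E[v_t] = E[v_{t'}] = 0, and all relevant variances are strictly positive. Then |ρ(u_t v_t, u_{t'} v_{t'})| ≤ |ρ(v_t, v_{t'})|, where ρ(X,Y) = Cov(X,Y)/(√Var(X)·√Var(Y)) denotes the Pearson correlation coefficient. -/

import Mathlib

open MeasureTheory ProbabilityTheory

noncomputable def cov {Ω : Type*} [MeasurableSpace Ω] (X Y : Ω → ℝ) (μ : Measure Ω) : ℝ :=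
  (∫ ω, X ω * Y ω ∂μ) - (∫ ω, X ω ∂μ) * (∫ ω, Y ω ∂μ)

noncomputable def pearson {Ω : Type*} [MeasurableSpace Ω] (X Y : Ω → ℝ) (μ : Measure Ω) : ℝ :=
  cov X Y μ / (Real.sqrt (variance X μ) * Real.sqrt (variance Y μ))

private lemma aux_integrable_mul {Ω : Type*} [MeasurableSpace Ω] {μ : Measure Ω}
    {f g : Ω → ℝ} (hf : MemLp f 2 μ) (hg : MemLp g 2 μ) :
    Integrable (fun ω => f ω * g ω) μ := by
  refine ((hf.integrable_sq.add hg.integrable_sq).div_const 2).mono'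
    (hf.aestronglyMeasurable.mul hg.aestronglyMeasurable) (ae_of_all _ fun ω => ?_)
  simp only [Pi.add_apply, Pi.div_apply]
  rw [Real.norm_eq_abs, abs_mul]
  nlinarith [sq_nonneg (|f ω| - |g ω|), sq_abs (f ω), sq_abs (g ω)]

set_option maxHeartbeats 1000000 in
/-- Proposition 5: `|ρ(u_t v_t, u_{t'} v_{t'})| ≤ |ρ(v_t, v_{t'})|`. -/
theorem pearson_of_products_le
    {Ω : Type*} [MeasurableSpace Ω] (μ : Measure Ω) [IsProbabilityMeasure μ]
    (ut ut' vt vt' : Ω → ℝ)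
    (hut : MemLp ut 2 μ) (hut' : MemLp ut' 2 μ)
    (hvt : MemLp vt 2 μ) (hvt' : MemLp vt' 2 μ)
    (hjoint : IndepFun (fun ω => (ut ω, ut' ω)) (fun ω => (vt ω, vt' ω)) μ)
    (huu : IndepFun ut ut' μ)
    (hmv : (∫ ω, vt ω ∂μ) = 0) (hmv' : (∫ ω, vt' ω ∂μ) = 0)
    (hVar1 : 0 < variance (fun ω => ut ω * vt ω) μ)
    (hVar2 : 0 < variance (fun ω => ut' ω * vt' ω) μ)
    (hVar3 : 0 < variance vt μ) (hVar4 : 0 < variance vt' μ) :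
    |pearson (fun ω => ut ω * vt ω) (fun ω => ut' ω * vt' ω) μ| ≤ |pearson vt vt' μ| := by
  -- integrability facts
  have hu1 : Integrable ut μ := hut.integrable one_le_two
  have hu1' : Integrable ut' μ := hut'.integrable one_le_two
  have hv1 : Integrable vt μ := hvt.integrable one_le_two
  have hv1' : Integrable vt' μ := hvt'.integrable one_le_two
  -- derived independences
  have h_uv : IndepFun ut vt μ := hjoint.comp measurable_fst measurable_fst
  have h_u'v' : IndepFun ut' vt' μ := hjoint.comp measurable_snd measurable_snd
  have h_uu'vv' : IndepFun (fun ω => ut ω * ut' ω) (fun ω => vt ω * vt' ω) μ :=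
    hjoint.comp (measurable_fst.mul measurable_snd) (measurable_fst.mul measurable_snd)
  have h_u2v2 : IndepFun (fun ω => ut ω ^ 2) (fun ω => vt ω ^ 2) μ :=
    h_uv.comp (measurable_id.pow_const 2) (measurable_id.pow_const 2)
  have h_u2v2' : IndepFun (fun ω => ut' ω ^ 2) (fun ω => vt' ω ^ 2) μ :=
    h_u'v'.comp (measurable_id.pow_const 2) (measurable_id.pow_const 2)
  -- abbreviations
  set a := ∫ ω, ut ω ^ 2 ∂μ with ha_def
  set b := ∫ ω, ut' ω ^ 2 ∂μ with hb_def
  set e := ∫ ω, vt ω ^ 2 ∂μ with he_def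
  set e' := ∫ ω, vt' ω ^ 2 ∂μ with he'_def
  set m := ∫ ω, ut ω ∂μ with hm_def
  set m' := ∫ ω, ut' ω ∂μ with hm'_def
  set C := ∫ ω, vt ω * vt' ω ∂μ with hC_def
  -- MemLp 2 of the products
  have hX2int : Integrable (fun ω => (ut ω * vt ω) ^ 2) μ := by
    have h : Integrable (fun ω => ut ω ^ 2 * vt ω ^ 2) μ :=
      h_u2v2.integrable_mul hut.integrable_sq hvt.integrable_sq
    refine h.congr (ae_of_all _ fun ω => ?_)
    ring
  have hY2int : Integrable (fun ω => (ut' ω * vt' ω) ^ 2) μ := by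
    have h : Integrable (fun ω => ut' ω ^ 2 * vt' ω ^ 2) μ :=
      h_u2v2'.integrable_mul hut'.integrable_sq hvt'.integrable_sq
    refine h.congr (ae_of_all _ fun ω => ?_)
    ring
  have hXmem : MemLp (fun ω => ut ω * vt ω) 2 μ :=
    (memLp_two_iff_integrable_sq (hut.aestronglyMeasurable.mul hvt.aestronglyMeasurable)).2 hX2int
  have hYmem : MemLp (fun ω => ut' ω * vt' ω) 2 μ :=
    (memLp_two_iff_integrable_sq
      (hut'.aestronglyMeasurable.mul hvt'.aestronglyMeasurable)).2 hY2int
  -- means of the products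
  have hEX : (∫ ω, ut ω * vt ω ∂μ) = 0 := by
    have h : (∫ ω, ut ω * vt ω ∂μ) = m * (∫ ω, vt ω ∂μ) :=
      h_uv.integral_fun_mul_eq_mul_integral hu1.aestronglyMeasurable hv1.aestronglyMeasurable
    rw [h, hmv, mul_zero]
  have hEY : (∫ ω, ut' ω * vt' ω ∂μ) = 0 := by
    have h : (∫ ω, ut' ω * vt' ω ∂μ) = m' * (∫ ω, vt' ω ∂μ) :=
      h_u'v'.integral_fun_mul_eq_mul_integral hu1'.aestronglyMeasurable hv1'.aestronglyMeasurable
    rw [h, hmv', mul_zero]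
  -- E[XY] = m m' C
  have hEXY : (∫ ω, (ut ω * vt ω) * (ut' ω * vt' ω) ∂μ) = m * m' * C := by
    have h1 : (∫ ω, (ut ω * ut' ω) * (vt ω * vt' ω) ∂μ)
        = (∫ ω, ut ω * ut' ω ∂μ) * C :=
      h_uu'vv'.integral_fun_mul_eq_mul_integral (huu.integrable_mul hu1 hu1').aestronglyMeasurable
        (aux_integrable_mul hvt hvt').aestronglyMeasurable
    have h2 : (∫ ω, ut ω * ut' ω ∂μ) = m * m' := huu.integral_fun_mul_eq_mul_integral hu1.aestronglyMeasurable hu1'.aestronglyMeasurable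
    calc (∫ ω, (ut ω * vt ω) * (ut' ω * vt' ω) ∂μ)
        = (∫ ω, (ut ω * ut' ω) * (vt ω * vt' ω) ∂μ) := by
          refine integral_congr_ae (ae_of_all _ fun ω => ?_); ring
      _ = m * m' * C := by rw [h1, h2]
  -- integrals of squares of the products
  have hIX2 : (∫ ω, (ut ω * vt ω) ^ 2 ∂μ) = a * e := by
    have h : (∫ ω, ut ω ^ 2 * vt ω ^ 2 ∂μ) = a * e :=
      h_u2v2.integral_fun_mul_eq_mul_integral hut.integrable_sq.aestronglyMeasurable hvt.integrable_sq.aestronglyMeasurable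
    rw [← h]
    refine integral_congr_ae (ae_of_all _ fun ω => ?_); ring
  have hIY2 : (∫ ω, (ut' ω * vt' ω) ^ 2 ∂μ) = b * e' := by
    have h : (∫ ω, ut' ω ^ 2 * vt' ω ^ 2 ∂μ) = b * e' :=
      h_u2v2'.integral_fun_mul_eq_mul_integral hut'.integrable_sq.aestronglyMeasurable hvt'.integrable_sq.aestronglyMeasurable
    rw [← h]
    refine integral_congr_ae (ae_of_all _ fun ω => ?_); ring
  -- variances
  have hVarX : variance (fun ω => ut ω * vt ω) μ = a * e := by
    rw [variance_eq_sub hXmem]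
    have h1 : μ[(fun ω => ut ω * vt ω) ^ 2] = a * e := hIX2
    have h2 : μ[fun ω => ut ω * vt ω] = 0 := hEX
    rw [h1, h2]; ring
  have hVarY : variance (fun ω => ut' ω * vt' ω) μ = b * e' := by
    rw [variance_eq_sub hYmem]
    have h1 : μ[(fun ω => ut' ω * vt' ω) ^ 2] = b * e' := hIY2
    have h2 : μ[fun ω => ut' ω * vt' ω] = 0 := hEY
    rw [h1, h2]; ring
  have hVarv : variance vt μ = e := by
    rw [variance_eq_sub hvt]
    have h1 : μ[vt ^ 2] = e := integral_congr_ae (ae_of_all _ fun ω => rfl)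
    rw [h1, hmv]; ring
  have hVarv' : variance vt' μ = e' := by
    rw [variance_eq_sub hvt']
    have h1 : μ[vt' ^ 2] = e' := integral_congr_ae (ae_of_all _ fun ω => rfl)
    rw [h1, hmv']; ring
  -- positivity
  have he_pos : 0 < e := hVarv ▸ hVar3
  have he'_pos : 0 < e' := hVarv' ▸ hVar4
  have ha_pos : 0 < a := by
    have hae : 0 < a * e := hVarX ▸ hVar1
    nlinarith
  have hb_pos : 0 < b := by
    have hbe : 0 < b * e' := hVarY ▸ hVar2
    nlinarith
  have hm2 : m ^ 2 ≤ a := by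
    have h := variance_nonneg ut μ
    rw [variance_eq_sub hut] at h
    have h1 : μ[ut ^ 2] = a := integral_congr_ae (ae_of_all _ fun ω => rfl)
    rw [h1] at h
    linarith
  have hm2' : m' ^ 2 ≤ b := by
    have h := variance_nonneg ut' μ
    rw [variance_eq_sub hut'] at h
    have h1 : μ[ut' ^ 2] = b := integral_congr_ae (ae_of_all _ fun ω => rfl)
    rw [h1] at h
    linarith
  -- covariances
  have hcovXY : cov (fun ω => ut ω * vt ω) (fun ω => ut' ω * vt' ω) μ = m * m' * C := by
    unfold cov
    rw [hEXY, hEX, hEY]; ring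
  have hcovv : cov vt vt' μ = C := by
    unfold cov
    rw [hmv]; ring
  -- assemble
  rw [pearson, pearson, hcovXY, hcovv, hVarX, hVarY, hVarv, hVarv',
    Real.sqrt_mul ha_pos.le, Real.sqrt_mul hb_pos.le]
  have hsa : 0 < Real.sqrt a := Real.sqrt_pos.2 ha_pos
  have hsb : 0 < Real.sqrt b := Real.sqrt_pos.2 hb_pos
  have hse : 0 < Real.sqrt e := Real.sqrt_pos.2 he_pos
  have hse' : 0 < Real.sqrt e' := Real.sqrt_pos.2 he'_pos
  have hma : |m| ≤ Real.sqrt a := by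
    rw [← Real.sqrt_sq_eq_abs]; exact Real.sqrt_le_sqrt hm2
  have hmb : |m'| ≤ Real.sqrt b := by
    rw [← Real.sqrt_sq_eq_abs]; exact Real.sqrt_le_sqrt hm2'
  rw [abs_div, abs_div, abs_mul, abs_mul,
    abs_of_pos (by positivity : (0:ℝ) < Real.sqrt a * Real.sqrt e * (Real.sqrt b * Real.sqrt e')),
    abs_of_pos (by positivity : (0:ℝ) < Real.sqrt e * Real.sqrt e')]
  rw [div_le_div_iff₀ (by positivity) (by positivity)]
  have hmm : |m| * |m'| ≤ Real.sqrt a * Real.sqrt b :=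
    mul_le_mul hma hmb (abs_nonneg _) hsa.le
  nlinarith [abs_nonneg C, abs_nonneg m, abs_nonneg m', mul_pos hse hse',
    mul_nonneg (mul_nonneg (abs_nonneg C) hse.le) hse'.le,
    mul_le_mul_of_nonneg_right hmm (mul_nonneg (mul_nonneg (abs_nonneg C) hse.le) hse'.le)]
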